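/- Let k ≥ 2 be an integer and q ∈ (0,1), and define λ̃(x) := q·k·∫₀ˣ λ_q(t)dt. Then for every x ∈ [0,1]: 1 - ( 1 - ( q/(1-(1-q)·λ̃(x)) )²·λ_q(x) )^{k-1} = x. That is, the degree distribution pair (λ_q, ρ) with ρ(x) = x^{k-1} satisfies the belief-propagation density-evolution fixed-point equation of the LDPC-GM ensemble with inner (2,2) regular LDGM code on the BEC with erasure probability q, with equality for all x ∈ [0,1]. -/

import Mathlib

/-- `D_q(x) = 1 - (1-q)(1 - kx + (k-1)(1 - (1-x)^{k/(k-1)}))`. -/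
noncomputable def Dq (k : ℕ) (q x : ℝ) : ℝ :=
  1 - (1 - q) * (1 - k * x + ((k : ℝ) - 1) * (1 - (1 - x) ^ ((k : ℝ) / ((k : ℝ) - 1))))

/-- The check-regular variable degree distribution
`λ_q(x) = (1 - (1-x)^{1/(k-1)}) / D_q(x)²`. -/
noncomputable def lamq (k : ℕ) (q x : ℝ) : ℝ :=
  (1 - (1 - x) ^ (1 / ((k : ℝ) - 1))) / (Dq k q x) ^ 2

/-!
Since `D_q' = (1-q)·k·(1 - (1-x)^{1/(k-1)})`, the integrand is `λ_q = D_q' / ((1-q)·k·D_q²)`,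
with antiderivative `-1 / ((1-q)·k·D_q)`. As `D_q(0) = q`, this gives
`1 - (1-q)·λ̃(x) = q / D_q(x)`, so the fraction inside the fixed-point equation is `D_q(x)`, and
`D_q(x)²·λ_q(x) = 1 - (1-x)^{1/(k-1)}`; raising `(1-x)^{1/(k-1)}` to the power `k-1` gives back
`1-x`.
Bernoulli's inequality `(1-x)^{k/(k-1)} ≥ 1 - kx/(k-1)` shows `D_q ≥ q > 0` for `x ≤ 1`.
-/

open Set

section

variable {k : ℕ}

lemma one_lt_natCast_of_two_le (hk : 2 ≤ k) : (1 : ℝ) < k := by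
  exact_mod_cast hk

lemma sub_one_mul_div_sub_one (hk : 2 ≤ k) :
    ((k : ℝ) - 1) * ((k : ℝ) / ((k : ℝ) - 1)) = k :=
  mul_div_cancel₀ _ (sub_pos.2 (one_lt_natCast_of_two_le hk)).ne'

lemma one_le_div_sub_one (hk : 2 ≤ k) : (1 : ℝ) ≤ (k : ℝ) / ((k : ℝ) - 1) := by
  have hk' := one_lt_natCast_of_two_le hk
  rw [le_div_iff₀ (by linarith)]
  linarith

lemma div_sub_one_sub_one (hk : 2 ≤ k) :
    (k : ℝ) / ((k : ℝ) - 1) - 1 = 1 / ((k : ℝ) - 1) := by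
  rw [div_sub_one (sub_pos.2 (one_lt_natCast_of_two_le hk)).ne']
  ring

lemma rpow_one_div_sub_one_pow (hk : 2 ≤ k) {y : ℝ} (hy : 0 ≤ y) :
    (y ^ (1 / ((k : ℝ) - 1))) ^ (k - 1) = y := by
  have hcast : (k : ℝ) - 1 = ((k - 1 : ℕ) : ℝ) := by
    rw [Nat.cast_sub (by omega : 1 ≤ k), Nat.cast_one]
  rw [hcast, one_div]
  exact Real.rpow_inv_natCast_pow hy (by omega)

lemma Dq_zero (q : ℝ) : Dq k q 0 = q := by
  simp [Dq]

lemma le_Dq (hk : 2 ≤ k) {q x : ℝ} (hq : q ≤ 1) (hx : x ≤ 1) : q ≤ Dq k q x := by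
  set p : ℝ := (k : ℝ) / ((k : ℝ) - 1)
  have hbernoulli : 1 - p * x ≤ (1 - x) ^ p := by
    have := one_add_mul_self_le_rpow_one_add (s := -x) (by linarith) (one_le_div_sub_one hk)
    rwa [← sub_eq_add_neg, mul_neg, ← sub_eq_add_neg] at this
  have hk' := one_lt_natCast_of_two_le hk
  have hinner : ((k : ℝ) - 1) * (1 - (1 - x) ^ p) ≤ k * x := by
    calc ((k : ℝ) - 1) * (1 - (1 - x) ^ p) ≤ ((k : ℝ) - 1) * (p * x) := by gcongr; linarith
      _ = k * x := by rw [← mul_assoc, sub_one_mul_div_sub_one hk]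
  unfold Dq
  nlinarith

lemma hasDerivAt_Dq (hk : 2 ≤ k) (q x : ℝ) :
    HasDerivAt (Dq k q) ((1 - q) * k * (1 - (1 - x) ^ (1 / ((k : ℝ) - 1)))) x := by
  set p : ℝ := (k : ℝ) / ((k : ℝ) - 1)
  have hpow : HasDerivAt (fun y : ℝ => (1 - y) ^ p) (p * (1 - x) ^ (p - 1) * (-1)) x :=
    (Real.hasDerivAt_rpow_const (Or.inr (one_le_div_sub_one hk))).comp x
      ((hasDerivAt_id x).const_sub 1)
  have hDq := ((((hasDerivAt_id x).const_mul (k : ℝ)).const_sub 1).add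
    ((hpow.const_sub 1).const_mul ((k : ℝ) - 1))).const_mul (1 - q) |>.const_sub 1
  refine hDq.congr_deriv ?_
  rw [div_sub_one_sub_one hk]
  linear_combination (-(1 - q) * (1 - x) ^ (1 / ((k : ℝ) - 1))) * sub_one_mul_div_sub_one hk

lemma continuous_Dq (hk : 2 ≤ k) (q : ℝ) : Continuous (Dq k q) :=
  continuous_iff_continuousAt.2 fun x => (hasDerivAt_Dq hk q x).continuousAt

lemma hasDerivAt_neg_inv_Dq (hk : 2 ≤ k) {q x : ℝ} (hq : q ≠ 1) (hD : Dq k q x ≠ 0) :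
    HasDerivAt (fun y => -(((1 - q) * k)⁻¹ * (Dq k q y)⁻¹)) (lamq k q x) x := by
  have hk0 : (k : ℝ) ≠ 0 := by linarith [one_lt_natCast_of_two_le hk]
  have hq' : 1 - q ≠ 0 := sub_ne_zero.2 hq.symm
  refine (((hasDerivAt_Dq hk q x).inv hD).const_mul ((1 - q) * k)⁻¹).neg.congr_deriv ?_
  unfold lamq
  field_simp

lemma integral_lamq (hk : 2 ≤ k) {q x : ℝ} (hq : q ∈ Ioo (0 : ℝ) 1) (hx : x ≤ 1) :
    ∫ t in (0 : ℝ)..x, lamq k q t = ((1 - q) * k)⁻¹ * (q⁻¹ - (Dq k q x)⁻¹) := by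
  have hDpos : ∀ t ∈ uIcc (0 : ℝ) x, 0 < Dq k q t := fun t ht =>
    hq.1.trans_le (le_Dq hk hq.2.le (ht.2.trans (sup_le zero_le_one hx)))
  have hcont : ContinuousOn (lamq k q) (uIcc (0 : ℝ) x) := by
    have hexp : (0 : ℝ) ≤ 1 / ((k : ℝ) - 1) := by
      have := one_lt_natCast_of_two_le hk
      positivity
    refine ContinuousOn.div (Continuous.continuousOn ?_) ((continuous_Dq hk q).pow 2).continuousOn
      fun t ht => pow_ne_zero 2 (hDpos t ht).ne'
    exact continuous_const.sub
      ((continuous_const.sub continuous_id).rpow_const fun _ => Or.inr hexp)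
  rw [intervalIntegral.integral_eq_sub_of_hasDerivAt
    (fun t ht => hasDerivAt_neg_inv_Dq hk hq.2.ne (hDpos t ht).ne') hcont.intervalIntegrable,
    Dq_zero]
  ring

end

theorem stmt11 (k : ℕ) (hk : 2 ≤ k) (q : ℝ) (hq : q ∈ Set.Ioo (0 : ℝ) 1)
    (x : ℝ) (hx : x ∈ Set.Icc (0 : ℝ) 1) :
    1 - (1 - (q / (1 - (1 - q) * (q * k * ∫ t in (0 : ℝ)..x, lamq k q t))) ^ 2 *
        lamq k q x) ^ (k - 1) = x := by
  have hD : 0 < Dq k q x := hq.1.trans_le (le_Dq hk hq.2.le hx.2)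
  have hk0 : (k : ℝ) ≠ 0 := by linarith [one_lt_natCast_of_two_le hk]
  have hq1 : 1 - q ≠ 0 := sub_ne_zero.2 hq.2.ne'
  have hfrac : q / (1 - (1 - q) * (q * k * ∫ t in (0 : ℝ)..x, lamq k q t)) = Dq k q x := by
    rw [integral_lamq hk hq hx.2]
    field_simp [hq.1.ne']
    ring
  have hsq : Dq k q x ^ 2 * lamq k q x = 1 - (1 - x) ^ (1 / ((k : ℝ) - 1)) := by
    unfold lamq
    field_simp
  rw [hfrac, hsq, sub_sub_cancel, rpow_one_div_sub_one_pow hk (by linarith [hx.2]), sub_sub_cancel]
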